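/- Let K be a field of characteristic 0, r ≥ 1, p_0,…,p_r ∈ K[X] with p_0 ≠ 0 and p_r ≠ 0, and let L* be the operator on K(X) given by L*(u)(X) = ∑_{i=0}^r p_i(X) u(X−i). If R ∈ K(X) is such that L*(R) is a polynomial, then every pole of R is an integer shift of a zero of p_0·p_r in the following sense: for every monic irreducible polynomial q ∈ K[X] dividing the denominator of R (written in lowest terms), there exist integers k₀ and k_r such that q(X) divides p_0(X+k₀) and q(X) divides p_r(X+k_r). -/

import Mathlib

open Polynomial

section Helpers

variable {K : Type*} [Field K]

private lemma shift_shift (f : Polynomial K) (c d : K) :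
    (f.comp (X + C c)).comp (X + C d) = f.comp (X + C (c + d)) := by
  rw [comp_assoc]
  congr 1
  rw [add_comp, X_comp, C_comp, add_assoc, ← C_add, add_comm d c]

private lemma shift_zero (f : Polynomial K) : f.comp (X + C (0 : K)) = f := by
  simp

private lemma shift_dvd {f g : Polynomial K} (c : K) (h : f ∣ g) :
    f.comp (X + C c) ∣ g.comp (X + C c) := by
  obtain ⟨u, rfl⟩ := h
  exact ⟨u.comp (X + C c), (mul_comp f u (X + C c))⟩

private lemma shift_dvd_iff {f g : Polynomial K} (c : K) :
    f.comp (X + C c) ∣ g.comp (X + C c) ↔ f ∣ g := by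
  constructor
  · intro h
    have h2 := shift_dvd (-c) h
    have h0 : c + -c = 0 := by ring
    rw [shift_shift, shift_shift, h0, shift_zero, shift_zero] at h2
    exact h2
  · exact shift_dvd c

private lemma shift_irreducible {f : Polynomial K} (c : K) (h : Irreducible f) :
    Irreducible (f.comp (X + C c)) := by
  have : f.comp (X + C c) = algEquivAevalXAddC c f := by
    simp [algEquivAevalXAddC, algEquivOfCompEqX, comp_eq_aeval]
  rw [this]
  exact h.map (algEquivAevalXAddC c)

private lemma shift_eq_self [CharZero K] {q : Polynomial K} (hq : Irreducible q)
    {c : K} (h : q.comp (X + C c) = q) : c = 0 := by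
  by_contra hc
  have heval : ∀ x : K, q.eval (x + c) = q.eval x := by
    intro x
    conv_rhs => rw [← h]
    simp [eval_comp]
  have hn : ∀ n : ℕ, q.eval ((n : K) * c) = q.eval 0 := by
    intro n
    induction n with
    | zero => simp
    | succ n ih =>
      push_cast
      rw [add_mul, one_mul, heval ((n : K) * c), ih]
  have hzero : q - C (q.eval 0) = 0 := by
    apply eq_zero_of_infinite_isRoot
    refine Set.infinite_of_injective_forall_mem
      (f := fun n : ℕ => (n : K) * c) ?_ ?_
    · intro a b hab
      have : (a : K) = b := mul_right_cancel₀ hc (by simpa using hab)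
      exact_mod_cast this
    · intro n
      simp only [Set.mem_setOf_eq, IsRoot, eval_sub, eval_C, hn n, sub_self]
  have : q = C (q.eval 0) := sub_eq_zero.mp hzero
  have hdeg := hq.natDegree_pos
  rw [this, natDegree_C] at hdeg
  exact absurd hdeg (lt_irrefl 0)

private lemma shift_inj [CharZero K] {q : Polynomial K} (hq : Irreducible q) :
    Function.Injective (fun k : ℤ => q.comp (X + C (k : K))) := by
  intro k k' hkk'
  simp only at hkk'
  have h2 : q.comp (X + C ((k - k' : ℤ) : K)) = q := by
    have h3 := congrArg (fun f => Polynomial.comp f (X + C (-(k' : K)))) hkk'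
    simp only [shift_shift] at h3
    have e1 : (k : K) + -(k' : K) = ((k - k' : ℤ) : K) := by push_cast; ring
    have e2 : (k' : K) + -(k' : K) = 0 := by ring
    rw [e1, e2, shift_zero] at h3
    exact h3
  have := shift_eq_self hq h2
  have : ((k - k' : ℤ) : K) = 0 := this
  have : (k - k' : ℤ) = 0 := by exact_mod_cast this
  omega

private lemma finite_shifts [CharZero K] {q b : Polynomial K} (hq : Irreducible q)
    (hqm : q.Monic) (hb : b ≠ 0) :
    {k : ℤ | q.comp (X + C (k : K)) ∣ b}.Finite := by
  classical
  apply Set.Finite.of_finite_image (f := fun k : ℤ => q.comp (X + C (k : K)))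
  · apply Set.Finite.subset (UniqueFactorizationMonoid.normalizedFactors b).toFinset.finite_toSet
    rintro _ ⟨k, hk, rfl⟩
    simp only [Finset.mem_coe, Multiset.mem_toFinset]
    obtain ⟨d, hd, hassoc⟩ := UniqueFactorizationMonoid.exists_mem_normalizedFactors_of_dvd hb
      (shift_irreducible (k : K) hq) hk
    have h1 : normalize d = d := UniqueFactorizationMonoid.normalize_normalized_factor _ hd
    have h2 : normalize (q.comp (X + C (k : K))) = q.comp (X + C (k : K)) :=
      (hqm.comp_X_add_C _).normalize_eq_self
    rwa [hassoc.eq_of_normalized h2 h1]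
  · exact (shift_inj hq).injOn

private lemma extract_dvd {r : ℕ} {p A B : ℕ → Polynomial K} {P : Polynomial K}
    (key : ∑ i ∈ Finset.range (r + 1),
        p i * A i * ∏ j ∈ (Finset.range (r + 1)).erase i, B j
      = P * ∏ j ∈ Finset.range (r + 1), B j)
    {q' : Polynomial K} (hq' : Prime q') {i0 : ℕ} (hi0 : i0 ∈ Finset.range (r + 1))
    (hdvd : q' ∣ B i0) (hnot : ∀ j ∈ Finset.range (r + 1), j ≠ i0 → ¬ q' ∣ B j)
    (hnA : ¬ q' ∣ A i0) : q' ∣ p i0 := by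
  have hterm : q' ∣ p i0 * A i0 * ∏ j ∈ (Finset.range (r + 1)).erase i0, B j := by
    have hsum := Finset.add_sum_erase (Finset.range (r + 1))
      (fun i => p i * A i * ∏ j ∈ (Finset.range (r + 1)).erase i, B j) hi0
    have heq : p i0 * A i0 * ∏ j ∈ (Finset.range (r + 1)).erase i0, B j
        = P * ∏ j ∈ Finset.range (r + 1), B j
          - ∑ i ∈ (Finset.range (r + 1)).erase i0,
              p i * A i * ∏ j ∈ (Finset.range (r + 1)).erase i, B j := by
      rw [← key, ← hsum]; ring
    rw [heq]
    apply dvd_sub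
    · exact Dvd.dvd.mul_left (hdvd.trans (Finset.dvd_prod_of_mem _ hi0)) P
    · apply Finset.dvd_sum
      intro i hi
      have hne : i0 ≠ i := fun h => (Finset.ne_of_mem_erase hi) h.symm
      have hi0' : i0 ∈ (Finset.range (r + 1)).erase i :=
        Finset.mem_erase.mpr ⟨hne, hi0⟩
      exact Dvd.dvd.mul_left (hdvd.trans (Finset.dvd_prod_of_mem _ hi0')) _
  rcases hq'.dvd_mul.mp hterm with h | h
  · rcases hq'.dvd_mul.mp h with h' | h'
    · exact h'
    · exact absurd h' hnA
  · obtain ⟨j, hj, hjd⟩ := hq'.exists_mem_finset_dvd h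
    exact absurd hjd (hnot j (Finset.mem_of_mem_erase hj) (Finset.ne_of_mem_erase hj))

private lemma algEquiv_algebraMap (τ : RatFunc K ≃ₐ[K] RatFunc K) (u : Polynomial K)
    (h : τ RatFunc.X = algebraMap (Polynomial K) (RatFunc K) u) (f : Polynomial K) :
    τ (algebraMap (Polynomial K) (RatFunc K) f)
      = algebraMap (Polynomial K) (RatFunc K) (f.comp u) := by
  have key : τ.toAlgHom.comp (IsScalarTower.toAlgHom K (Polynomial K) (RatFunc K))
      = (IsScalarTower.toAlgHom K (Polynomial K) (RatFunc K)).comp (aeval u) := by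
    apply Polynomial.algHom_ext
    simpa [RatFunc.algebraMap_X] using h
  have := DFunLike.congr_fun key f
  simpa [comp_eq_aeval] using this

private lemma sigma_inv_pow_algebraMap (σ : RatFunc K ≃ₐ[K] RatFunc K)
    (hσ : σ RatFunc.X = RatFunc.X + 1) (i : ℕ) (f : Polynomial K) :
    ((σ⁻¹) ^ i) (algebraMap (Polynomial K) (RatFunc K) f)
      = algebraMap (Polynomial K) (RatFunc K) (f.comp (X + C (-(i : K)))) := by
  have hinv : σ⁻¹ RatFunc.X = algebraMap (Polynomial K) (RatFunc K) (X + C (-1 : K)) := by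
    have h1 : σ⁻¹ (σ RatFunc.X) = RatFunc.X := σ.symm_apply_apply RatFunc.X
    rw [hσ, map_add, map_one] at h1
    have : σ⁻¹ RatFunc.X = RatFunc.X - 1 := by linear_combination h1
    rw [this, map_add, RatFunc.algebraMap_X, RatFunc.algebraMap_C]
    simp [sub_eq_add_neg]
  induction i generalizing f with
  | zero => simp
  | succ i ih =>
    rw [pow_succ, AlgEquiv.mul_apply,
      algEquiv_algebraMap σ⁻¹ (X + C (-1 : K)) hinv f, ih (f.comp (X + C (-1 : K))),
      shift_shift]
    have e1 : (-1 : K) + -(i : K) = -((i + 1 : ℕ) : K) := by push_cast; ring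
    rw [e1]

private lemma sigma_zpow_apply (σ : RatFunc K ≃ₐ[K] RatFunc K)
    (hσ : σ RatFunc.X = RatFunc.X + 1) (i : ℕ) (R : RatFunc K) :
    (σ ^ (-(i : ℤ))) R
      = algebraMap (Polynomial K) (RatFunc K) (R.num.comp (X + C (-(i : K))))
        / algebraMap (Polynomial K) (RatFunc K) (R.denom.comp (X + C (-(i : K)))) := by
  have hpow : (σ ^ (-(i : ℤ))) = (σ⁻¹) ^ i := by
    rw [zpow_neg, zpow_natCast, inv_pow]
  rw [hpow, ← R.num_div_denom, map_div₀, sigma_inv_pow_algebraMap σ hσ,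
    sigma_inv_pow_algebraMap σ hσ, RatFunc.num_div_denom]

end Helpers

/-- If `L*(R)` is a polynomial, then every pole of `R` is an integer shift of a zero of
`p_0` and of a zero of `p_r`: every monic irreducible factor `q` of the denominator of `R`
divides some integer shift `p_0(X+k₀)` of `p_0` and some integer shift `p_r(X+k_r)` of
`p_r`. -/
theorem poles_are_shifts_of_zeros (K : Type*) [Field K] [CharZero K]
    (σ : RatFunc K ≃ₐ[K] RatFunc K) (hσ : σ RatFunc.X = RatFunc.X + 1)
    (r : ℕ) (hr : 1 ≤ r) (p : ℕ → Polynomial K)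
    (hp0 : p 0 ≠ 0) (hpr : p r ≠ 0)
    (R : RatFunc K)
    (hpoly : ∃ P : Polynomial K,
      (∑ i ∈ Finset.range (r + 1),
          algebraMap (Polynomial K) (RatFunc K) (p i) * (σ ^ (-(i : ℤ))) R) =
        algebraMap (Polynomial K) (RatFunc K) P)
    (q : Polynomial K) (hq_monic : q.Monic) (hq_irr : Irreducible q)
    (hq_dvd : q ∣ R.denom) :
    (∃ k₀ : ℤ, q ∣ (p 0).comp (X + C (k₀ : K))) ∧
    (∃ kr : ℤ, q ∣ (p r).comp (X + C (kr : K))) := by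
  obtain ⟨P, hP⟩ := hpoly
  set a : Polynomial K := R.num with ha
  set b : Polynomial K := R.denom with hb
  have hbne : b ≠ 0 := R.denom_ne_zero
  set A : ℕ → Polynomial K := fun i => a.comp (X + C (-(i : K))) with hA
  set B : ℕ → Polynomial K := fun i => b.comp (X + C (-(i : K))) with hB
  have hBne : ∀ i, B i ≠ 0 := fun i => comp_X_add_C_ne_zero_iff.mpr hbne
  -- polynomial identity after clearing denominators
  have key : ∑ i ∈ Finset.range (r + 1),
      p i * A i * ∏ j ∈ (Finset.range (r + 1)).erase i, B j
      = P * ∏ j ∈ Finset.range (r + 1), B j := by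
    apply RatFunc.algebraMap_injective K
    have hP' : ∑ i ∈ Finset.range (r + 1),
        algebraMap (Polynomial K) (RatFunc K) (p i)
          * (algebraMap (Polynomial K) (RatFunc K) (A i)
            / algebraMap (Polynomial K) (RatFunc K) (B i))
        = algebraMap (Polynomial K) (RatFunc K) P := by
      rw [← hP]
      refine Finset.sum_congr rfl fun i _ => ?_
      rw [sigma_zpow_apply σ hσ i R]
    rw [map_sum, map_mul]
    calc ∑ i ∈ Finset.range (r + 1), algebraMap (Polynomial K) (RatFunc K)
          (p i * A i * ∏ j ∈ (Finset.range (r + 1)).erase i, B j)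
        = ∑ i ∈ Finset.range (r + 1),
            (algebraMap (Polynomial K) (RatFunc K) (p i)
              * (algebraMap (Polynomial K) (RatFunc K) (A i)
                / algebraMap (Polynomial K) (RatFunc K) (B i)))
              * algebraMap (Polynomial K) (RatFunc K)
                  (∏ j ∈ Finset.range (r + 1), B j) := by
          refine Finset.sum_congr rfl fun i hi => ?_
          rw [← Finset.mul_prod_erase _ _ hi]
          simp only [map_mul]
          have hBi : algebraMap (Polynomial K) (RatFunc K) (B i) ≠ 0 := by
            simpa using hBne i
          field_simp
      _ = algebraMap (Polynomial K) (RatFunc K) P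
            * algebraMap (Polynomial K) (RatFunc K)
                (∏ j ∈ Finset.range (r + 1), B j) := by
          rw [← Finset.sum_mul, hP']
  -- the set of integer shifts of q dividing b
  set S : Set ℤ := {k : ℤ | q.comp (X + C (k : K)) ∣ b} with hS
  have hS0 : (0 : ℤ) ∈ S := by
    simpa [hS, shift_zero] using hq_dvd
  have hSfin : S.Finite := finite_shifts hq_irr hq_monic hbne
  set F : Finset ℤ := hSfin.toFinset with hF
  have hFne : F.Nonempty := ⟨0, by simpa [hF] using hS0⟩
  have hmemF : ∀ k : ℤ, k ∈ F ↔ q.comp (X + C (k : K)) ∣ b := by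
    intro k; simp [hF, hS]
  -- divisibility of the shifted denominators
  have hBiff : ∀ (k : ℤ) (j : ℕ), q.comp (X + C (k : K)) ∣ B j ↔ (k + j) ∈ F := by
    intro k j
    rw [hmemF]
    constructor
    · intro h
      have := shift_dvd (j : K) h
      rw [shift_shift, shift_shift] at this
      have h2 : (-(j : K)) + (j : K) = 0 := by ring
      rw [h2, shift_zero] at this
      have h3 : ((k : K) + (j : K)) = ((k + j : ℤ) : K) := by push_cast; ring
      rwa [h3] at this
    · intro h
      have := shift_dvd (-(j : K)) h
      rw [shift_shift] at this
      have h3 : ((k + j : ℤ) : K) + (-(j : K)) = (k : K) := by push_cast; ring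
      rwa [h3] at this
  -- q doesn't divide shifted numerators
  have hAnot : ∀ (k : ℤ) (j : ℕ), (k + j) ∈ F → ¬ q.comp (X + C (k : K)) ∣ A j := by
    intro k j hkj hdvd
    have hdvd' := shift_dvd (j : K) hdvd
    rw [shift_shift, shift_shift] at hdvd'
    have h2 : (-(j : K)) + (j : K) = 0 := by ring
    rw [h2, shift_zero] at hdvd'
    have h3 : ((k : K) + (j : K)) = ((k + j : ℤ) : K) := by push_cast; ring
    rw [h3] at hdvd'
    have hdvdb : q.comp (X + C ((k + j : ℤ) : K)) ∣ b := (hmemF _).mp hkj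
    have hunit := (RatFunc.isCoprime_num_denom R).isUnit_of_dvd' hdvd' hdvdb
    exact (shift_irreducible _ hq_irr).not_isUnit hunit
  have hprime : ∀ c : K, Prime (q.comp (X + C c)) :=
    fun c => (shift_irreducible c hq_irr).prime
  constructor
  · -- p 0 : use the maximum m of F
    set m : ℤ := F.max' hFne with hm
    refine ⟨-m, ?_⟩
    have hmF : m ∈ F := F.max'_mem hFne
    have hd0 : q.comp (X + C ((m : ℤ) : K)) ∣ B 0 := by
      rw [hBiff m 0]; simpa using hmF
    have hnot : ∀ j ∈ Finset.range (r + 1), j ≠ 0 → ¬ q.comp (X + C ((m : ℤ) : K)) ∣ B j := by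
      intro j hj hjne hdvd
      rw [hBiff m j] at hdvd
      have := F.le_max' _ hdvd
      omega
    have hnA : ¬ q.comp (X + C ((m : ℤ) : K)) ∣ A 0 := by
      apply hAnot m 0
      simpa using hmF
    have h0mem : (0 : ℕ) ∈ Finset.range (r + 1) := by simp
    have hdvd_p0 := extract_dvd key (hprime ((m : ℤ) : K)) h0mem hd0 hnot hnA
    have := shift_dvd ((-m : ℤ) : K) hdvd_p0
    rw [shift_shift] at this
    have h4 : ((m : ℤ) : K) + ((-m : ℤ) : K) = 0 := by push_cast; ring
    rwa [h4, shift_zero] at this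
  · -- p r : use the minimum n of F
    set n : ℤ := F.min' hFne with hn
    refine ⟨(r : ℤ) - n, ?_⟩
    have hnF : n ∈ F := F.min'_mem hFne
    have hdr : q.comp (X + C ((n - r : ℤ) : K)) ∣ B r := by
      rw [hBiff (n - r) r]
      have : n - (r : ℤ) + r = n := by ring
      rw [this]; exact hnF
    have hnot : ∀ j ∈ Finset.range (r + 1), j ≠ r →
        ¬ q.comp (X + C ((n - r : ℤ) : K)) ∣ B j := by
      intro j hj hjne hdvd
      rw [hBiff (n - r) j] at hdvd
      have := F.min'_le _ hdvd
      have hjr : j < r + 1 := Finset.mem_range.mp hj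
      omega
    have hnA : ¬ q.comp (X + C ((n - r : ℤ) : K)) ∣ A r := by
      apply hAnot (n - r) r
      have : n - (r : ℤ) + r = n := by ring
      rw [this]; exact hnF
    have hrmem : r ∈ Finset.range (r + 1) := by simp
    have hdvd_pr := extract_dvd key (hprime ((n - r : ℤ) : K)) hrmem hdr hnot hnA
    have := shift_dvd (((r : ℤ) - n : ℤ) : K) hdvd_pr
    rw [shift_shift] at this
    have h4 : ((n - r : ℤ) : K) + (((r : ℤ) - n : ℤ) : K) = 0 := by push_cast; ring
    rwa [h4, shift_zero] at this
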